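/- Let 𝔤 = 𝔥 ⊕ 𝔪 be a reductive decomposition and let r : 𝔪* → 𝔪 be skew and satisfy the Yang–Baxter-type equation r([α, β]_r) = p_𝔪([r α, r β]) for all α, β ∈ 𝔪*. Define P : 𝔤* → 𝔤 by P η := r(η|_𝔪), where η|_𝔪 is the restriction of η to 𝔪. Then P is skew (ξ(P η) = −η(P ξ) for all η, ξ ∈ 𝔤*), and for all η, ξ, ε in the annihilator 𝔥° := {η ∈ 𝔤* : η(𝔥) = 0} one has ε(P([η, ξ]_P) − [P η, P ξ]) = 0, where [η, ξ]_P(v) := η([P ξ, v]) − ξ([P η, v]). That is, P solves the Yang–Baxter equation of the pair (𝔤, 𝔥). -/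

import Mathlib

/-- The projection `p_𝔪 : 𝔤 → 𝔪` along `𝔥`, for a decomposition `𝔤 = 𝔥 ⊕ 𝔪`. -/
noncomputable def pm {L : Type*} [LieRing L] [LieAlgebra ℝ L]
    (H : LieSubalgebra ℝ L) (m : Submodule ℝ L)
    (hc : IsCompl H.toSubmodule m) : L →ₗ[ℝ] m :=
  Submodule.linearProjOfIsCompl m H.toSubmodule hc.symm

/-- For `x ∈ 𝔤`, the map `𝔪 → 𝔪`, `v ↦ p_𝔪([x, v])`. -/
noncomputable def adm {L : Type*} [LieRing L] [LieAlgebra ℝ L]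
    (H : LieSubalgebra ℝ L) (m : Submodule ℝ L)
    (hc : IsCompl H.toSubmodule m) (x : L) : m →ₗ[ℝ] m :=
  pm H m hc ∘ₗ (LieAlgebra.ad ℝ L x) ∘ₗ m.subtype

/-- The bracket `[α, β]_r : u ↦ α([rβ, u]_𝔪) - β([rα, u]_𝔪)` on `𝔪*`. -/
noncomputable def bracketr {L : Type*} [LieRing L] [LieAlgebra ℝ L]
    (H : LieSubalgebra ℝ L) (m : Submodule ℝ L)
    (hc : IsCompl H.toSubmodule m) (r : Module.Dual ℝ m →ₗ[ℝ] m)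
    (α β : Module.Dual ℝ m) : Module.Dual ℝ m :=
  α ∘ₗ adm H m hc (r β : L) - β ∘ₗ adm H m hc (r α : L)

/-- `r : 𝔪* → 𝔪` is skew: `ξ(rη) = -η(rξ)`. -/
def rIsSkew {L : Type*} [LieRing L] [LieAlgebra ℝ L]
    (m : Submodule ℝ L) (r : Module.Dual ℝ m →ₗ[ℝ] m) : Prop :=
  ∀ η ξ : Module.Dual ℝ m, ξ (r η) = - η (r ξ)

/-- `r : 𝔪* → 𝔪` is `𝔥`-equivariant: `r(α ∘ (ad u)|_𝔪) = -[u, rα]` for `u ∈ 𝔥`. -/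
def rIsEquivariant {L : Type*} [LieRing L] [LieAlgebra ℝ L]
    (H : LieSubalgebra ℝ L) (m : Submodule ℝ L)
    (hc : IsCompl H.toSubmodule m) (r : Module.Dual ℝ m →ₗ[ℝ] m) : Prop :=
  ∀ u ∈ H, ∀ α : Module.Dual ℝ m,
    (r (α ∘ₗ adm H m hc u) : L) = -⁅u, (r α : L)⁆

/-- `r` satisfies the Yang–Baxter-type equation `r([α,β]_r) = p_𝔪([rα, rβ])`. -/
def rIsYB {L : Type*} [LieRing L] [LieAlgebra ℝ L]
    (H : LieSubalgebra ℝ L) (m : Submodule ℝ L)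
    (hc : IsCompl H.toSubmodule m) (r : Module.Dual ℝ m →ₗ[ℝ] m) : Prop :=
  ∀ α β : Module.Dual ℝ m,
    r (bracketr H m hc r α β) = pm H m hc ⁅(r α : L), (r β : L)⁆

/-- The annihilator `𝔥° ⊆ 𝔤*` of `𝔥`. -/
def inAnn {L : Type*} [LieRing L] [LieAlgebra ℝ L] (H : LieSubalgebra ℝ L)
    (η : Module.Dual ℝ L) : Prop :=
  ∀ x ∈ H, η x = 0

/-- A linear map `P : 𝔤* → 𝔤` is skew. -/
def IsSkewMap {L : Type*} [LieRing L] [LieAlgebra ℝ L]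
    (P : Module.Dual ℝ L →ₗ[ℝ] L) : Prop :=
  ∀ η ξ : Module.Dual ℝ L, ξ (P η) = - η (P ξ)

/-- `[η, ξ]_P : v ↦ η([Pξ, v]) - ξ([Pη, v])`. -/
def bracketP {L : Type*} [LieRing L] [LieAlgebra ℝ L]
    (P : Module.Dual ℝ L →ₗ[ℝ] L) (η ξ : Module.Dual ℝ L) : Module.Dual ℝ L :=
  η ∘ₗ LieAlgebra.ad ℝ L (P ξ) - ξ ∘ₗ LieAlgebra.ad ℝ L (P η)

/-- The map `P : 𝔤* → 𝔤`, `η ↦ r(η|_𝔪)`, induced by `r : 𝔪* → 𝔪`. -/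
noncomputable def Pof {L : Type*} [LieRing L] [LieAlgebra ℝ L]
    (m : Submodule ℝ L) (r : Module.Dual ℝ m →ₗ[ℝ] m) :
    Module.Dual ℝ L →ₗ[ℝ] L :=
  m.subtype ∘ₗ r ∘ₗ m.subtype.dualMap

theorem inAnn.apply_pm {L : Type*} [LieRing L] [LieAlgebra ℝ L]
    {H : LieSubalgebra ℝ L} {m : Submodule ℝ L} (hc : IsCompl H.toSubmodule m)
    {η : Module.Dual ℝ L} (hη : inAnn H η) (x : L) : η (pm H m hc x) = η x := by
  conv_rhs => rw [← Submodule.projection_add_projection_eq_self hc x,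
    Submodule.projection_apply, Submodule.projection_apply]
  rw [map_add, hη _ (H.toSubmodule.projectionOnto m hc x).2, zero_add]
  rfl

theorem Pof_apply {L : Type*} [LieRing L] [LieAlgebra ℝ L] (m : Submodule ℝ L)
    (r : Module.Dual ℝ m →ₗ[ℝ] m) (η : Module.Dual ℝ L) :
    Pof m r η = r (m.subtype.dualMap η) :=
  rfl

theorem isSkewMap_Pof {L : Type*} [LieRing L] [LieAlgebra ℝ L] {m : Submodule ℝ L}
    {r : Module.Dual ℝ m →ₗ[ℝ] m} (hskew : rIsSkew m r) : IsSkewMap (Pof m r) :=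
  fun η ξ => hskew (m.subtype.dualMap η) (m.subtype.dualMap ξ)

section Annihilator

variable {L : Type*} [LieRing L] [LieAlgebra ℝ L] {H : LieSubalgebra ℝ L}
  {m : Submodule ℝ L} (hc : IsCompl H.toSubmodule m) {r : Module.Dual ℝ m →ₗ[ℝ] m}
  {η ξ : Module.Dual ℝ L}

theorem dualMap_bracketP_Pof (hη : inAnn H η) (hξ : inAnn H ξ) :
    m.subtype.dualMap (bracketP (Pof m r) η ξ) =
      bracketr H m hc r (m.subtype.dualMap η) (m.subtype.dualMap ξ) := by
  ext v
  simp only [bracketP, bracketr, adm, LinearMap.dualMap_apply', LinearMap.sub_apply,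
    LinearMap.comp_apply, Submodule.subtype_apply, LieAlgebra.ad_apply,
    hη.apply_pm hc, hξ.apply_pm hc, Pof_apply]

theorem Pof_bracketP (hyb : rIsYB H m hc r) (hη : inAnn H η) (hξ : inAnn H ξ) :
    Pof m r (bracketP (Pof m r) η ξ) = pm H m hc ⁅Pof m r η, Pof m r ξ⁆ := by
  rw [Pof_apply, dualMap_bracketP_Pof hc hη hξ, hyb, Pof_apply, Pof_apply]

end Annihilator

theorem reductive_r_matrix_solves_yb_general {L : Type*} [LieRing L] [LieAlgebra ℝ L]
    (H : LieSubalgebra ℝ L) (m : Submodule ℝ L)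
    (hc : IsCompl H.toSubmodule m)
    (r : Module.Dual ℝ m →ₗ[ℝ] m)
    (hskew : rIsSkew m r) (hyb : rIsYB H m hc r) :
    IsSkewMap (Pof m r) ∧
    (∀ η ξ ε : Module.Dual ℝ L, inAnn H η → inAnn H ξ → inAnn H ε →
      ε (Pof m r (bracketP (Pof m r) η ξ) - ⁅Pof m r η, Pof m r ξ⁆) = 0) := by
  refine ⟨isSkewMap_Pof hskew, fun η ξ ε hη hξ hε => ?_⟩
  rw [Pof_bracketP hc hyb hη hξ, map_sub, hε.apply_pm hc, sub_self]

/-- in a reductive decomposition `𝔤 = 𝔥 ⊕ 𝔪`, a skew solution `r` of the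
Yang–Baxter-type equation on `𝔪` induces a skew map `P η = r(η|_𝔪)` solving the
Yang–Baxter equation of the pair `(𝔤,𝔥)`. -/
theorem reductive_r_matrix_solves_yb {L : Type*} [LieRing L] [LieAlgebra ℝ L]
    [FiniteDimensional ℝ L]
    (H : LieSubalgebra ℝ L) (m : Submodule ℝ L)
    (hc : IsCompl H.toSubmodule m)
    (hred : ∀ u ∈ H, ∀ v ∈ m, ⁅u, v⁆ ∈ m)
    (r : Module.Dual ℝ m →ₗ[ℝ] m)
    (hskew : rIsSkew m r) (hyb : rIsYB H m hc r) :
    IsSkewMap (Pof m r) ∧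
    (∀ η ξ ε : Module.Dual ℝ L, inAnn H η → inAnn H ξ → inAnn H ε →
      ε (Pof m r (bracketP (Pof m r) η ξ) - ⁅Pof m r η, Pof m r ξ⁆) = 0) :=
  reductive_r_matrix_solves_yb_general H m hc r hskew hyb
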